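/- arXiv:math/0501425 — 3 statements merged into one kernel-verified Lean document; each statement's English description precedes it below -/
import Mathlib

section
/- The function h₅ is analytic in a neighborhood of 0 and satisfies there (for z ≠ 0) the second-order differential equation 4z(z²+22z+125)·h₅''(z) + 4·((z²+22z+125) + z(z+11))·h₅'(z) + (z+10)·h₅(z) = 0, equivalently {D_z² + [1/z + (z+11)/(z²+22z+125)]·D_z + (z+10)/(4z(z²+22z+125))} h₅ = 0. -/
noncomputable def seriesFn (c : ℤ → ℂ) (z : ℂ) : ℂ :=
  ∑' n : ℕ, c (n : ℤ) * z ^ n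

/-!
The recurrence gives `500 (n+1)² ‖cₙ₊₁‖ ≤ 92 (n+1)² max ‖cₙ₋₁‖ ‖cₙ‖`, so the coefficients stay
bounded by `‖c₀‖` and `h₅` is the sum of its power series on the unit disc. There the power series
can be differentiated term by term, and the coefficient of `zⁿ` in the left-hand side of the
differential equation is the left-hand side of the recurrence at `n`; the term `c₋₁ = 0` is what
makes the constant coefficient fit the same pattern.
-/

open FormalMultilinearSeries

section PowerSeries

variable {𝕜 : Type*} [NontriviallyNormedField 𝕜] {a : ℕ → 𝕜}

theorem HasFPowerSeriesOnBall.deriv_ofScalars [CompleteSpace 𝕜] {f : 𝕜 → 𝕜} {r : ENNReal}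
    (hf : HasFPowerSeriesOnBall f (ofScalars 𝕜 a) 0 r) :
    HasFPowerSeriesOnBall (deriv f) (ofScalars 𝕜 fun n => (n + 1) * a (n + 1)) 0 r := by
  convert (ContinuousLinearMap.apply 𝕜 𝕜 (1 : 𝕜)).comp_hasFPowerSeriesOnBall hf.fderiv using 1
  · rfl
  ext n : 1
  rw [← mkPiRing_coeff_eq (ofScalars 𝕜 _), ← mkPiRing_coeff_eq
    ((ContinuousLinearMap.apply 𝕜 𝕜 1).compFormalMultilinearSeries (ofScalars 𝕜 a).derivSeries)]
  congr 1
  change _ = (ofScalars 𝕜 a).derivSeries.coeff n 1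
  simp [coeff_ofScalars, nsmul_eq_mul]

theorem HasFPowerSeriesOnBall.hasSum_ofScalars {f : 𝕜 → 𝕜} {r : ENNReal}
    (hf : HasFPowerSeriesOnBall f (ofScalars 𝕜 a) 0 r) {z : 𝕜} (hz : z ∈ Metric.eball 0 r) :
    HasSum (fun n => a n * z ^ n) (f z) := by
  simpa [ofScalars_apply_eq, mul_comm] using hf.hasSum hz

theorem hasFPowerSeriesOnBall_ofScalarsSum_of_norm_le [CompleteSpace 𝕜] {M : ℝ}
    (ha : ∀ n, ‖a n‖ ≤ M) :
    HasFPowerSeriesOnBall (ofScalarsSum a) (ofScalars 𝕜 a) 0 1 := by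
  have hr : 1 ≤ (ofScalars 𝕜 a).radius :=
    le_radius_of_bound _ M fun n => by simpa [ofScalars_norm] using ha n
  exact ((ofScalars 𝕜 a).hasFPowerSeriesOnBall (zero_lt_one.trans_le hr)).mono one_pos hr

end PowerSeries

theorem HasSum.mul_left_shift {R : Type*} [CommRing R] [TopologicalSpace R]
    [IsTopologicalRing R] {u : ℤ → R} (hu : u (-1) = 0) {z s : R}
    (h : HasSum (fun n : ℕ => u n * z ^ n) s) :
    HasSum (fun n : ℕ => u (n - 1) * z ^ n) (z * s) := by
  refine (hasSum_nat_add_iff' 1).1 ?_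
  simpa [hu, pow_succ, mul_comm, mul_assoc] using h.mul_left z

def SatisfiesH5Recurrence (c : ℤ → ℂ) : Prop :=
  ∀ n : ℕ, (2 * (n:ℂ) - 1) ^ 2 * c (n - 1) + 2 * (44 * (n:ℂ) ^ 2 + 22 * n + 5) * c n
    + 500 * ((n:ℂ) + 1) ^ 2 * c (n + 1) = 0

namespace SatisfiesH5Recurrence

variable {c : ℤ → ℂ}

theorem norm_succ_le (hc : SatisfiesH5Recurrence c) (n : ℕ) :
    500 * ((n:ℝ) + 1) ^ 2 * ‖c (n + 1)‖
      ≤ (2 * n - 1) ^ 2 * ‖c (n - 1)‖ + 2 * (44 * n ^ 2 + 22 * n + 5) * ‖c n‖ := by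
  have h : ((500 * ((n:ℝ) + 1) ^ 2 : ℝ) : ℂ) * c (n + 1) = -((((2 * n - 1) ^ 2 : ℝ) : ℂ) * c (n - 1)
      + ((2 * (44 * n ^ 2 + 22 * n + 5) : ℝ) : ℂ) * c n) := by
    push_cast
    linear_combination hc n
  calc 500 * ((n:ℝ) + 1) ^ 2 * ‖c (n + 1)‖
      = ‖((500 * ((n:ℝ) + 1) ^ 2 : ℝ) : ℂ) * c (n + 1)‖ := by
        rw [norm_mul, Complex.norm_of_nonneg (by positivity)]
    _ ≤ _ := by
        rw [h, norm_neg]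
        refine (norm_add_le _ _).trans_eq ?_
        rw [norm_mul, norm_mul, Complex.norm_of_nonneg (by positivity),
          Complex.norm_of_nonneg (by positivity)]

theorem norm_le (hc : SatisfiesH5Recurrence c) {M : ℝ} (hm1 : ‖c (-1)‖ ≤ M) (h0 : ‖c 0‖ ≤ M) (n : ℕ) : ‖c n‖ ≤ M := by
  suffices ∀ n : ℕ, ‖c (n - 1)‖ ≤ M ∧ ‖c n‖ ≤ M from (this n).2
  intro n
  induction n with
  | zero => exact ⟨hm1, h0⟩
  | succ n ih =>
    refine ⟨by simpa using ih.2, ?_⟩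
    have hM : 0 ≤ M := (norm_nonneg _).trans h0
    have key := hc.norm_succ_le n
    push_cast
    nlinarith [ih.1, ih.2, sq_nonneg (2 * (n:ℝ) - 1), norm_nonneg (c (n + 1))]

/- The left-hand side is `z P + Q + 500 R` with `P = 4z²F₂ + 8zF₁ + F₀`,
`Q = 88z²F₂ + 132zF₁ + 10F₀` and `R = zF₂ + F₁`, whose coefficients of `zⁿ` are
`(2n+1)² cₙ`, `2(44n²+22n+5) cₙ` and `(n+1)² cₙ₊₁`. -/
theorem ode_of_hasSum (hc : SatisfiesH5Recurrence c) (hm1 : c (-1) = 0) {z F₀ F₁ F₂ : ℂ}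
    (h₀ : HasSum (fun n : ℕ => c n * z ^ n) F₀)
    (h₁ : HasSum (fun n : ℕ => ((n:ℂ) + 1) * c (n + 1) * z ^ n) F₁)
    (h₂ : HasSum (fun n : ℕ => ((n:ℂ) + 1) * ((n:ℂ) + 2) * c (n + 2) * z ^ n) F₂) :
    4*z*(z^2+22*z+125) * F₂ + 4*((z^2+22*z+125) + z*(z+11)) * F₁ + (z+10) * F₀ = 0 := by
  have hz₁ : HasSum (fun n : ℕ => (n:ℂ) * c n * z ^ n) (z * F₁) :=
    (HasSum.mul_left_shift (u := fun m : ℤ => ((m:ℂ) + 1) * c (m + 1)) (by simp)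
      (by simpa using h₁)).congr_fun fun n => by simp
  have hz₂ : HasSum (fun n : ℕ => (n:ℂ) * ((n:ℂ) + 1) * c (n + 1) * z ^ n) (z * F₂) :=
    (HasSum.mul_left_shift (u := fun m : ℤ => ((m:ℂ) + 1) * ((m:ℂ) + 2) * c (m + 2)) (by simp)
      (by simpa using h₂)).congr_fun fun n => by
        simp only [Int.cast_sub, Int.cast_natCast, Int.cast_one]
        ring_nf
  have hzz₂ : HasSum (fun n : ℕ => ((n:ℂ) - 1) * n * c n * z ^ n) (z * (z * F₂)) :=
    (HasSum.mul_left_shift (u := fun m : ℤ => (m:ℂ) * ((m:ℂ) + 1) * c (m + 1)) (by simp)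
      (by simpa using hz₂)).congr_fun fun n => by simp
  have hP : HasSum (fun n : ℕ => (2 * (n:ℂ) + 1) ^ 2 * c n * z ^ n)
      (4 * (z * (z * F₂)) + 8 * (z * F₁) + F₀) :=
    (((hzz₂.mul_left 4).add (hz₁.mul_left 8)).add h₀).congr_fun fun n => by ring
  have hzP : HasSum (fun n : ℕ => (2 * (n:ℂ) - 1) ^ 2 * c (n - 1) * z ^ n)
      (z * (4 * (z * (z * F₂)) + 8 * (z * F₁) + F₀)) :=
    (HasSum.mul_left_shift (u := fun m : ℤ => (2 * (m:ℂ) + 1) ^ 2 * c m) (by simp [hm1])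
      (by simpa using hP)).congr_fun fun n => by
        simp only [Int.cast_sub, Int.cast_natCast, Int.cast_one]
        ring
  have hQ : HasSum (fun n : ℕ => 2 * (44 * (n:ℂ) ^ 2 + 22 * n + 5) * c n * z ^ n)
      (88 * (z * (z * F₂)) + 132 * (z * F₁) + 10 * F₀) :=
    (((hzz₂.mul_left 88).add (hz₁.mul_left 132)).add (h₀.mul_left 10)).congr_fun fun n => by ring
  have hR : HasSum (fun n : ℕ => 500 * ((n:ℂ) + 1) ^ 2 * c (n + 1) * z ^ n)
      (500 * (z * F₂) + 500 * F₁) :=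
    ((hz₂.mul_left 500).add (h₁.mul_left 500)).congr_fun fun n => by ring
  have hsum := ((hzP.add hQ).add hR).congr_fun (g := fun _ => 0) fun n => by
    linear_combination -z ^ n * hc n
  linear_combination hsum.unique hasSum_zero

end SatisfiesH5Recurrence

theorem stmt4_general (c : ℤ → ℂ) (hm1 : c (-1) = 0)
    (hrec : ∀ n : ℕ, (2*(n:ℂ)-1)^2 * c ((n:ℤ)-1)
      + 2*(44*(n:ℂ)^2+22*(n:ℂ)+5) * c (n:ℤ)
      + 500*((n:ℂ)+1)^2 * c ((n:ℤ)+1) = 0) :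
    ∃ ε : ℝ, 0 < ε ∧
      (∀ z : ℂ, ‖z‖ < ε → AnalyticAt ℂ (seriesFn c) z) ∧
      ∀ z : ℂ, ‖z‖ < ε → z ≠ 0 →
        4*z*(z^2+22*z+125) * deriv (deriv (seriesFn c)) z
          + 4*((z^2+22*z+125) + z*(z+11)) * deriv (seriesFn c) z
          + (z+10) * seriesFn c z = 0 := by
  have hc : SatisfiesH5Recurrence c := hrec
  have hseries : seriesFn c = ofScalarsSum fun n : ℕ => c n := by
    ext z
    simp only [seriesFn, ofScalarsSum_eq_tsum, smul_eq_mul]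
  have hf := hasFPowerSeriesOnBall_ofScalarsSum_of_norm_le
    (hc.norm_le (M := ‖c 0‖) (by simp [hm1]) le_rfl)
  have hf₁ := hf.deriv_ofScalars
  have hf₂ := hf₁.deriv_ofScalars
  rw [hseries]
  refine ⟨1, one_pos, fun z hz => hf.analyticAt_of_mem (by simpa [← ofReal_norm] using hz), fun z hz _ => ?_⟩
  have hz' : z ∈ Metric.eball 0 1 := by simpa [← ofReal_norm] using hz
  refine hc.ode_of_hasSum hm1 (hf.hasSum_ofScalars hz') ?_ ?_
  · exact (hf₁.hasSum_ofScalars hz').congr_fun fun n => by push_cast; ring_nf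
  · exact (hf₂.hasSum_ofScalars hz').congr_fun fun n => by push_cast; ring_nf

theorem stmt4 (c : ℤ → ℂ) (hm1 : c (-1) = 0) (h0 : c 0 = 1)
    (hrec : ∀ n : ℕ, (2*(n:ℂ)-1)^2 * c ((n:ℤ)-1)
      + 2*(44*(n:ℂ)^2+22*(n:ℂ)+5) * c (n:ℤ)
      + 500*((n:ℂ)+1)^2 * c ((n:ℤ)+1) = 0) :
    ∃ ε : ℝ, 0 < ε ∧
      (∀ z : ℂ, ‖z‖ < ε → AnalyticAt ℂ (seriesFn c) z) ∧
      ∀ z : ℂ, ‖z‖ < ε → z ≠ 0 →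
        4*z*(z^2+22*z+125) * deriv (deriv (seriesFn c)) z
          + 4*((z^2+22*z+125) + z*(z+11)) * deriv (seriesFn c) z
          + (z+10) * seriesFn c z = 0 :=
  stmt4_general c hm1 hrec
end

section
/- For all complex x̂ in some neighborhood of 0, ₂F₁(1/2, 1/2; 1; 1 − ((1−x̂)/(1+x̂))⁴) = (1+x̂)² · ₂F₁(1/2, 1/2; 1; x̂⁴). -/
/-!
Write `F = ₂F₁(1/2, 1/2; 1; ·)`, which solves `z(1-z)F'' + (1-2z)F' - F/4 = 0` on the unit disc.
Both sides of the identity are analytic near `0` and solve the same equation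
`x A y'' + B y' + C y = 0` with polynomial coefficients and `A 0 = B 0 = 1`: for the right side
`(1 + x)² F(x⁴)` this is the hypergeometric equation after the substitution `z = x⁴`, for the left
side `F(1 - ((1-x)/(1+x))⁴)` it is a rational identity in `x`. At the regular singular point `0`
the indicial polynomial is `r²`, so a solution that is analytic at `0` is determined by its value
there, and both sides take the value `1` at `0`.
-/

noncomputable def hyp2F1 (a b c z : ℂ) : ℂ :=
  ∑' n : ℕ, (ascPochhammer ℂ n).eval a * (ascPochhammer ℂ n).eval b /
    ((ascPochhammer ℂ n).eval c * (n.factorial : ℂ)) * z ^ n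

open Filter Topology

-- The `j`-th termwise derivative of `∑ a n * z ^ n`; the truncated `n - j` is harmless since
-- `n.descFactorial j = 0` for `n < j`.
noncomputable def termwiseDeriv (a : ℕ → ℂ) (j : ℕ) (z : ℂ) : ℂ :=
  ∑' n, a n * ((n.descFactorial j : ℂ) * z ^ (n - j))

lemma hasDerivAt_descFactorial_mul_pow (n j : ℕ) (z : ℂ) :
    HasDerivAt (fun w : ℂ => (n.descFactorial j : ℂ) * w ^ (n - j))
      ((n.descFactorial (j + 1) : ℂ) * z ^ (n - (j + 1))) z := by
  refine ((hasDerivAt_pow (n - j) z).const_mul (n.descFactorial j : ℂ)).congr_deriv ?_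
  rw [Nat.descFactorial_succ, Nat.sub_add_eq]
  push_cast
  ring

lemma summable_pow_mul_pow_sub {r : ℝ} (hr0 : 0 < r) (hr1 : r < 1) (j : ℕ) :
    Summable (fun n : ℕ => (n : ℝ) ^ j * r ^ (n - j)) := by
  have hgeom := (summable_pow_mul_geometric_of_norm_lt_one j
    (by rwa [Real.norm_of_nonneg hr0.le] : ‖r‖ < 1)).mul_right (r ^ j)⁻¹
  refine hgeom.of_nonneg_of_le (fun n => by positivity) fun n => ?_
  rw [mul_assoc]
  gcongr
  rw [le_mul_inv_iff₀ (by positivity), ← pow_add]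
  exact pow_le_pow_of_le_one hr0.le hr1.le (by omega)

section

variable {a : ℕ → ℂ} {C : ℝ}

lemma norm_coeff_mul_descFactorial_mul_pow_le (ha : ∀ n, ‖a n‖ ≤ C) {y : ℂ} {r : ℝ}
    (hy : ‖y‖ ≤ r) (n j : ℕ) :
    ‖a n * ((n.descFactorial j : ℂ) * y ^ (n - j))‖ ≤ C * ((n : ℝ) ^ j * r ^ (n - j)) := by
  rw [norm_mul, norm_mul, Complex.norm_natCast, norm_pow]
  gcongr
  · exact (norm_nonneg _).trans (ha 0)
  · exact ha n
  · exact_mod_cast n.descFactorial_le_pow j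

lemma summable_termwiseDeriv (ha : ∀ n, ‖a n‖ ≤ C) {z : ℂ} (hz : ‖z‖ < 1) (j : ℕ) :
    Summable (fun n => a n * ((n.descFactorial j : ℂ) * z ^ (n - j))) := by
  obtain ⟨r, hzr, hr1⟩ := exists_between hz
  exact .of_norm_bounded
    ((summable_pow_mul_pow_sub ((norm_nonneg z).trans_lt hzr) hr1 j).mul_left C)
    fun n => norm_coeff_mul_descFactorial_mul_pow_le ha hzr.le n j

lemma hasDerivAt_termwiseDeriv (ha : ∀ n, ‖a n‖ ≤ C) {z : ℂ} (hz : ‖z‖ < 1) (j : ℕ) :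
    HasDerivAt (termwiseDeriv a j) (termwiseDeriv a (j + 1) z) z := by
  obtain ⟨r, hzr, hr1⟩ := exists_between hz
  have hr0 : 0 < r := (norm_nonneg z).trans_lt hzr
  exact hasDerivAt_tsum_of_isPreconnected
    ((summable_pow_mul_pow_sub hr0 hr1 (j + 1)).mul_left C) Metric.isOpen_ball
    (convex_ball 0 r).isPreconnected
    (fun n y _ => (hasDerivAt_descFactorial_mul_pow n j y).const_mul (a n))
    (fun n y hy => norm_coeff_mul_descFactorial_mul_pow_le ha (mem_ball_zero_iff.mp hy).le n _)
    (mem_ball_zero_iff.mpr hzr) (summable_termwiseDeriv ha hz j) (mem_ball_zero_iff.mpr hzr)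

end

noncomputable def ellipticKCoeff (n : ℕ) : ℂ :=
  ((ascPochhammer ℂ n).eval (1 / 2) / n.factorial) ^ 2

lemma ellipticKCoeff_succ (n : ℕ) :
    ellipticKCoeff (n + 1) = ((n + 1 / 2) / (n + 1)) ^ 2 * ellipticKCoeff n := by
  rw [ellipticKCoeff, ellipticKCoeff, ascPochhammer_succ_eval, Nat.factorial_succ, ← mul_pow]
  push_cast
  rw [mul_comm ((n : ℂ) + 1), ← div_mul_div_comm, mul_comm, add_comm (1 / 2 : ℂ)]

lemma norm_ellipticKCoeff_le_one (n : ℕ) : ‖ellipticKCoeff n‖ ≤ 1 := by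
  induction n with
  | zero => simp [ellipticKCoeff]
  | succ n ih =>
    have hratio : ‖((n : ℂ) + 1 / 2) / (n + 1)‖ ≤ 1 := by
      rw [norm_div, ← Nat.cast_add_one, Complex.norm_natCast, div_le_one (by positivity)]
      calc ‖(n : ℂ) + 1 / 2‖ ≤ n + 1 / 2 := by simpa using norm_add_le (n : ℂ) (1 / 2)
        _ ≤ (n + 1 : ℕ) := by push_cast; linarith
    rw [ellipticKCoeff_succ, norm_mul, norm_pow]
    exact mul_le_one₀ (pow_le_one₀ (norm_nonneg _) hratio) (norm_nonneg _) ih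

lemma hyp2F1_half_half_one (z : ℂ) :
    hyp2F1 (1 / 2) (1 / 2) 1 z = termwiseDeriv ellipticKCoeff 0 z := by
  refine tsum_congr fun n => ?_
  rw [ascPochhammer_eval_one, ellipticKCoeff]
  simp only [Nat.descFactorial_zero, Nat.cast_one, Nat.sub_zero]
  ring

lemma termwiseDeriv_ellipticKCoeff_ode {z : ℂ} (hz : ‖z‖ < 1) :
    z * (1 - z) * termwiseDeriv ellipticKCoeff 2 z + (1 - 2 * z) * termwiseDeriv ellipticKCoeff 1 z
      - termwiseDeriv ellipticKCoeff 0 z / 4 = 0 := by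
  set F := termwiseDeriv ellipticKCoeff
  have hsum (j : ℕ) := (summable_termwiseDeriv norm_ellipticKCoeff_le_one hz j).hasSum
  -- `z F'' + F'` and `z² F'' + 2z F' + F/4` have the same coefficients, by the recurrence
  have hsq : HasSum (fun n : ℕ => ellipticKCoeff n * ((n : ℂ) ^ 2 * z ^ (n - 1)))
      (z * F 2 z + F 1 z) := by
    refine (((hsum 2).mul_left z).add (hsum 1)).congr_fun fun n => ?_
    rcases n with _ | _ | m <;> simp [Nat.descFactorial]
    ring
  have hlhs : HasSum (fun n : ℕ => ellipticKCoeff (n + 1) * (((n : ℂ) + 1) ^ 2 * z ^ n))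
      (z * F 2 z + F 1 z) := by
    simpa using (hasSum_nat_add_iff' 1).mpr hsq
  have hrhs : HasSum (fun n : ℕ => ellipticKCoeff n * (((n : ℂ) + 1 / 2) ^ 2 * z ^ n))
      (z ^ 2 * F 2 z + 2 * z * F 1 z + F 0 z / 4) := by
    refine ((((hsum 2).mul_left (z ^ 2)).add ((hsum 1).mul_left (2 * z))).add
      ((hsum 0).div_const 4)).congr_fun fun n => ?_
    rcases n with _ | _ | m <;> simp [Nat.descFactorial] <;> ring
  have hrec (n : ℕ) : ellipticKCoeff (n + 1) * (((n : ℂ) + 1) ^ 2 * z ^ n)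
      = ellipticKCoeff n * (((n : ℂ) + 1 / 2) ^ 2 * z ^ n) := by
    rw [ellipticKCoeff_succ]
    field_simp
  linear_combination hlhs.unique (hrhs.congr_fun hrec)

lemma AnalyticAt.exists_eventuallyEq_pow_succ_mul {y : ℂ → ℂ} (hy : AnalyticAt ℂ y 0)
    (hy0 : y 0 = 0) (hne : ¬∀ᶠ x in 𝓝 0, y x = 0) :
    ∃ k : ℕ, ∃ g : ℂ → ℂ, AnalyticAt ℂ g 0 ∧ g 0 ≠ 0 ∧ y =ᶠ[𝓝 0] fun x => x ^ (k + 1) * g x := by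
  obtain ⟨m, g, hg, hg0, hyg⟩ := hy.exists_eventuallyEq_pow_smul_nonzero_iff.mpr hne
  simp only [sub_zero, smul_eq_mul] at hyg
  rcases m with _ | k
  · have := hyg.self_of_nhds
    rw [hy0, pow_zero, one_mul] at this
    exact absurd this.symm hg0
  · exact ⟨k, g, hg, hg0, hyg⟩

lemma eventuallyEq_of_hasDerivAt {𝕜 F : Type*} [NontriviallyNormedField 𝕜] [NormedAddCommGroup F]
    [NormedSpace 𝕜 F] {f g f' g' : 𝕜 → F} {a : 𝕜} (hfg : f =ᶠ[𝓝 a] g)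
    (hf : ∀ᶠ x in 𝓝 a, HasDerivAt f (f' x) x) (hg : ∀ᶠ x in 𝓝 a, HasDerivAt g (g' x) x) :
    f' =ᶠ[𝓝 a] g' := by
  filter_upwards [eventually_eventually_nhds.mpr hfg, hf, hg] with x hx hfx hgx
  exact hfx.unique (hgx.congr_of_eventuallyEq hx)

def SolvesNearZero (A B C y : ℂ → ℂ) : Prop :=
  ∃ y' y'' : ℂ → ℂ, ∀ᶠ x in 𝓝 0, HasDerivAt y (y' x) x ∧ HasDerivAt y' (y'' x) x ∧
    x * A x * y'' x + B x * y' x + C x * y x = 0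

namespace SolvesNearZero

variable {A B C y : ℂ → ℂ}

lemma analyticAt (hy : SolvesNearZero A B C y) : AnalyticAt ℂ y 0 := by
  obtain ⟨y', y'', hy⟩ := hy
  exact Complex.analyticAt_iff_eventually_differentiableAt.mpr
    (hy.mono fun x hx => hx.1.differentiableAt)

lemma sub {z : ℂ → ℂ} (hy : SolvesNearZero A B C y) (hz : SolvesNearZero A B C z) :
    SolvesNearZero A B C (y - z) := by
  obtain ⟨y', y'', hy⟩ := hy
  obtain ⟨z', z'', hz⟩ := hz
  refine ⟨y' - z', y'' - z'', ?_⟩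
  filter_upwards [hy, hz] with x ⟨hy1, hy2, hy3⟩ ⟨hz1, hz2, hz3⟩
  exact ⟨hy1.sub hz1, hy2.sub hz2, by simp only [Pi.sub_apply]; linear_combination hy3 - hz3⟩

lemma eventually_eq_zero (hy : SolvesNearZero A B C y)
    (hA : ContinuousAt A 0) (hB : ContinuousAt B 0) (hC : ContinuousAt C 0)
    (hind : ∀ k : ℕ, k * A 0 + B 0 ≠ 0) (hy0 : y 0 = 0) :
    ∀ᶠ x in 𝓝 0, y x = 0 := by
  by_contra hne
  obtain ⟨k, g, hg, hg0, hyg⟩ := hy.analyticAt.exists_eventuallyEq_pow_succ_mul hy0 hne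
  obtain ⟨y', y'', hsol⟩ := hy
  obtain ⟨s, hs, hgs⟩ := hg.exists_mem_nhds_analyticOnNhd
  set χ : ℂ → ℂ := fun x => (k + 1) * g x + x * deriv g x with hχ
  have hχs : AnalyticOnNhd ℂ χ s := fun x hx =>
    (analyticAt_const.mul (hgs x hx)).add (analyticAt_id.mul (hgs.deriv x hx))
  have hy' : y' =ᶠ[𝓝 0] fun x => x ^ k * χ x :=
    eventuallyEq_of_hasDerivAt hyg (hsol.mono fun x hx => hx.1) <| eventually_of_mem hs
      fun x hx => ((hasDerivAt_pow (k + 1) x).mul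
        (hgs x hx).differentiableAt.hasDerivAt).congr_deriv (by simp only [hχ]; push_cast; ring)
  have hy'' : y'' =ᶠ[𝓝 0] fun x => k * x ^ (k - 1) * χ x + x ^ k * deriv χ x :=
    eventuallyEq_of_hasDerivAt hy' (hsol.mono fun x hx => hx.2.1) <| eventually_of_mem hs
      fun x hx => (hasDerivAt_pow k x).mul (hχs x hx).differentiableAt.hasDerivAt
  -- the equation is `x ^ k * Φ x = 0`, and `Φ 0` is `k * A 0 + B 0` times a nonzero factor
  set Φ : ℂ → ℂ := fun x => A x * (k * χ x + x * deriv χ x) + B x * χ x + C x * (x * g x)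
  have hΦ : ∀ᶠ x in 𝓝[≠] 0, Φ x = 0 := by
    filter_upwards [nhdsWithin_le_nhds (hsol.and (hy'.and (hy''.and hyg))),
      self_mem_nhdsWithin] with x ⟨⟨_, _, hode⟩, h1, h2, h3⟩ hx
    have hpow : x * (k * x ^ (k - 1)) = k * x ^ k := by
      rcases k with _ | k <;> simp [pow_succ]; ring
    refine (pow_ne_zero k hx).isUnit.mul_right_eq_zero.mp ?_
    linear_combination hode - x * A x * h2 - B x * h1 - C x * h3 - A x * χ x * hpow
  have hΦc : ContinuousAt Φ 0 := by
    have := (hχs 0 (mem_of_mem_nhds hs)).continuousAt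
    have := (hχs.deriv 0 (mem_of_mem_nhds hs)).continuousAt
    have := hg.continuousAt
    fun_prop
  have hΦ0 : Φ 0 = 0 := tendsto_nhds_unique hΦc.continuousWithinAt
    (tendsto_const_nhds.congr' (hΦ.mono fun x hx => hx.symm))
  have : (k * A 0 + B 0) * ((k + 1) * g 0) = 0 := by
    simp only [Φ, hχ, zero_mul, add_zero, mul_zero] at hΦ0
    linear_combination hΦ0
  simp [hind k, hg0, Nat.cast_add_one_ne_zero] at this

lemma eventuallyEq {z : ℂ → ℂ} (hy : SolvesNearZero A B C y)
    (hz : SolvesNearZero A B C z) (hA : ContinuousAt A 0) (hB : ContinuousAt B 0)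
    (hC : ContinuousAt C 0) (hind : ∀ k : ℕ, k * A 0 + B 0 ≠ 0) (h0 : y 0 = z 0) :
    y =ᶠ[𝓝 0] z := by
  filter_upwards [(hy.sub hz).eventually_eq_zero hA hB hC hind (sub_eq_zero.mpr h0)] with x hx
  exact sub_eq_zero.mp hx

end SolvesNearZero

lemma eventually_norm_lt_one {f : ℂ → ℂ} (hf : ContinuousAt f 0) (h0 : f 0 = 0) :
    ∀ᶠ x in 𝓝 0, ‖f x‖ < 1 :=
  hf.norm.eventually_lt continuousAt_const (by simp [h0])

-- The equation satisfied by `(1 + x)² F(x⁴)` whenever `F` solves the hypergeometric equation.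
abbrev SolvesQuarticODE (y : ℂ → ℂ) : Prop :=
  SolvesNearZero (fun x => (1 - x) * (1 + x) ^ 2 * (1 + x ^ 2))
    (fun x => (1 - 4 * x + 4 * x ^ 2 - 4 * x ^ 3 - x ^ 4) * (1 + x)) (fun x => -2 * (1 - x) ^ 3) y

lemma solvesQuarticODE_mul_comp_pow_four :
    SolvesQuarticODE (fun x => (1 + x) ^ 2 * termwiseDeriv ellipticKCoeff 0 (x ^ 4)) := by
  set F := termwiseDeriv ellipticKCoeff
  refine ⟨fun x => 2 * (1 + x) * F 0 (x ^ 4) + (1 + x) ^ 2 * (F 1 (x ^ 4) * (4 * x ^ 3)),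
    fun x => 2 * F 0 (x ^ 4) + 2 * (1 + x) * (F 1 (x ^ 4) * (4 * x ^ 3))
      + (2 * (1 + x) * (F 1 (x ^ 4) * (4 * x ^ 3))
        + (1 + x) ^ 2 * (F 2 (x ^ 4) * (4 * x ^ 3) * (4 * x ^ 3) + F 1 (x ^ 4) * (12 * x ^ 2))), ?_⟩
  filter_upwards [eventually_norm_lt_one (f := fun x => x ^ 4) (by fun_prop) (by simp)] with x hx
  have hF (j : ℕ) := (hasDerivAt_termwiseDeriv norm_ellipticKCoeff_le_one hx j).comp x
    ((hasDerivAt_pow 4 x).congr_deriv (by norm_num) : HasDerivAt (fun x => x ^ 4) (4 * x ^ 3) x)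
  have hu : HasDerivAt (fun x : ℂ => (1 + x) ^ 2) (2 * (1 + x)) x :=
    (((hasDerivAt_id x).const_add 1).fun_pow 2).congr_deriv (by norm_num)
  have hu' : HasDerivAt (fun x : ℂ => 2 * (1 + x)) 2 x := by
    simpa using ((hasDerivAt_id x).const_add 1).const_mul 2
  have hq' : HasDerivAt (fun x : ℂ => 4 * x ^ 3) (12 * x ^ 2) x :=
    ((hasDerivAt_pow 3 x).const_mul 4).congr_deriv (by norm_num; ring)
  refine ⟨hu.mul (hF 0), (hu'.mul (hF 0)).add (hu.mul ((hF 1).mul hq')), ?_⟩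
  linear_combination (-4 * (2 * x * ((1 - x) * (1 + x) ^ 2 * (1 + x ^ 2))
    + 2 * (1 + x) * ((1 - 4 * x + 4 * x ^ 2 - 4 * x ^ 3 - x ^ 4) * (1 + x))
    + -2 * (1 - x) ^ 3 * (1 + x) ^ 2)) * termwiseDeriv_ellipticKCoeff_ode hx

noncomputable def quarticTransform (x : ℂ) : ℂ := 1 - ((1 - x) / (1 + x)) ^ 4

lemma hasDerivAt_quarticTransform {x : ℂ} (hx : 1 + x ≠ 0) :
    HasDerivAt quarticTransform (8 * (1 - x) ^ 3 / (1 + x) ^ 5) x := by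
  have h := ((((hasDerivAt_id' x).const_sub 1).fun_div ((hasDerivAt_id' x).const_add 1) hx).fun_pow
    4).const_sub 1
  refine h.congr_deriv ?_
  norm_num
  field_simp
  ring

lemma hasDerivAt_quarticTransform_deriv {x : ℂ} (hx : 1 + x ≠ 0) :
    HasDerivAt (fun x => 8 * (1 - x) ^ 3 / (1 + x) ^ 5)
      (16 * (x - 1) ^ 2 * (x - 4) / (1 + x) ^ 6) x := by
  have h := ((((hasDerivAt_id' x).const_sub 1).fun_pow 3).const_mul 8).fun_div
    (((hasDerivAt_id' x).const_add 1).fun_pow 5) (pow_ne_zero 5 hx)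
  refine h.congr_deriv ?_
  field_simp
  ring

lemma solvesQuarticODE_comp_quarticTransform :
    SolvesQuarticODE (fun x => termwiseDeriv ellipticKCoeff 0 (quarticTransform x)) := by
  set F := termwiseDeriv ellipticKCoeff
  set P := quarticTransform
  set P' : ℂ → ℂ := fun x => 8 * (1 - x) ^ 3 / (1 + x) ^ 5
  set P'' : ℂ → ℂ := fun x => 16 * (x - 1) ^ 2 * (x - 4) / (1 + x) ^ 6
  refine ⟨fun x => F 1 (P x) * P' x, fun x => F 2 (P x) * P' x * P' x + F 1 (P x) * P'' x, ?_⟩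
  have hx0 : ∀ᶠ x : ℂ in 𝓝 0, 1 + x ≠ 0 :=
    (continuousAt_const.add continuousAt_id).eventually_ne (by norm_num)
  have hP0 : ∀ᶠ x in 𝓝 0, ‖P x‖ < 1 := eventually_norm_lt_one
    (hasDerivAt_quarticTransform (by norm_num)).continuousAt (by norm_num [P, quarticTransform])
  filter_upwards [hx0, hP0] with x hx hPx
  have hF (j : ℕ) := (hasDerivAt_termwiseDeriv norm_ellipticKCoeff_le_one hPx j).comp x
    (hasDerivAt_quarticTransform hx)
  refine ⟨hF 0, (hF 1).mul (hasDerivAt_quarticTransform_deriv hx), ?_⟩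
  -- after eliminating `F 0` by the hypergeometric equation at `P x`,
  -- the coefficients of `F 2` and `F 1` vanish identically
  have hcoeff2 : x * ((1 - x) * (1 + x) ^ 2 * (1 + x ^ 2)) * (P' x * P' x)
      + 4 * (-2 * (1 - x) ^ 3) * (P x * (1 - P x)) = 0 := by
    simp only [P, P', quarticTransform]
    field_simp
    ring
  have hcoeff1 : x * ((1 - x) * (1 + x) ^ 2 * (1 + x ^ 2)) * P'' x
      + (1 - 4 * x + 4 * x ^ 2 - 4 * x ^ 3 - x ^ 4) * (1 + x) * P' x
      + 4 * (-2 * (1 - x) ^ 3) * (1 - 2 * P x) = 0 := by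
    simp only [P, P', P'', quarticTransform]
    field_simp
    ring
  linear_combination F 2 (P x) * hcoeff2 + F 1 (P x) * hcoeff1
    + 8 * (1 - x) ^ 3 * termwiseDeriv_ellipticKCoeff_ode hPx

theorem stmt8 : ∃ ε : ℝ, 0 < ε ∧ ∀ x : ℂ, ‖x‖ < ε →
    hyp2F1 (1/2) (1/2) 1 (1 - ((1-x)/(1+x))^4)
      = (1+x)^2 * hyp2F1 (1/2) (1/2) 1 (x^4) := by
  have hagree := solvesQuarticODE_comp_quarticTransform.eventuallyEq
    solvesQuarticODE_mul_comp_pow_four (by fun_prop) (by fun_prop) (by fun_prop)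
    (fun k => by norm_num; exact_mod_cast k.succ_ne_zero) (by norm_num [quarticTransform])
  obtain ⟨ε, hε, hball⟩ := Metric.eventually_nhds_iff.mp hagree
  refine ⟨ε, hε, fun x hx => ?_⟩
  rw [hyp2F1_half_half_one, hyp2F1_half_half_one]
  exact hball (by rwa [dist_zero_right])
end

section
/- Let (cₙ) be the coefficients of h₆ defined by the stated recurrence. Then for every n ≥ 0, 72ⁿ·cₙ = Σ_{k=0}^{n} C(n,k)·(−8)^k · Σ_{j=0}^{n−k} C(n−k,j)³, where C(·,·) denotes binomial coefficients; in particular the numbers dₙ := 72ⁿ·cₙ are integers. -/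
/-!
The numbers `dₙ = ∑ₖ C(n,k) (-8)ᵏ a_{n-k}` are the binomial transform of the Franel numbers
`aₘ = ∑ⱼ C(m,j)³`, which satisfy `(m+1)² a_{m+1} = (7m²+7m+2) aₘ + 8m² a_{m-1}` by creative
telescoping. Multiplying the Franel recurrence by the weights
`C(n,m) (-8)^(n-m)` and summing by parts over `m` turns it into
`(n+1)² d_{n+1} + (17n²+17n+6) dₙ + 72n² d_{n-1} = 0`, which is also the recurrence of `72ⁿ cₙ`.
Both sequences start with `1`, and a three-term recurrence with nonvanishing leading coefficient
determines a sequence from its first term.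
-/

open Finset

section BinomialWeight

variable {R : Type*} [CommRing R]

theorem cast_choose_mul_succ_eq (n k : ℕ) :
    (n.choose k : R) * (n + 1) = ((n + 1).choose k : R) * (n + 1 - k) := by
  rcases le_or_gt k (n + 1) with hk | hk
  · have h := congrArg (Nat.cast : ℕ → R) (Nat.choose_mul_succ_eq n k)
    push_cast [hk] at h
    exact h
  · simp [Nat.choose_eq_zero_of_lt hk, Nat.choose_eq_zero_of_lt (show n < k by omega)]

theorem cast_choose_succ_right_eq (n k : ℕ) :
    (n.choose (k + 1) : R) * (k + 1) = (n.choose k : R) * (n - k) := by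
  rcases le_or_gt k n with hk | hk
  · have h := congrArg (Nat.cast : ℕ → R) (Nat.choose_succ_right_eq n k)
    push_cast [hk] at h
    exact h
  · simp [Nat.choose_eq_zero_of_lt hk, Nat.choose_eq_zero_of_lt (show n < k + 1 by omega)]

def binomialWeight (b : R) (n m : ℕ) : R := n.choose m * b ^ (n - m)

variable (b : R)

theorem binomialWeight_eq_zero_of_lt {n m : ℕ} (h : n < m) : binomialWeight b n m = 0 := by
  simp [binomialWeight, Nat.choose_eq_zero_of_lt h]

theorem binomialWeight_succ_zero (n : ℕ) :
    binomialWeight b (n + 1) 0 = b * binomialWeight b n 0 := by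
  simp [binomialWeight, pow_succ, mul_comm]

theorem binomialWeight_succ_succ (n m : ℕ) :
    binomialWeight b (n + 1) (m + 1) = b * binomialWeight b n (m + 1) + binomialWeight b n m := by
  rcases le_or_gt (m + 1) n with h | h
  · obtain ⟨t, rfl⟩ := Nat.exists_eq_add_of_le h
    simp only [binomialWeight, Nat.choose_succ_succ', Nat.cast_add,
      show m + 1 + t + 1 - (m + 1) = t + 1 by omega, show m + 1 + t - (m + 1) = t by omega,
      show m + 1 + t - m = t + 1 by omega, pow_succ]
    ring
  · simp [binomialWeight, Nat.choose_succ_succ', Nat.choose_eq_zero_of_lt h,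
      show n + 1 - (m + 1) = n - m by omega]

theorem add_one_mul_binomialWeight_succ_succ (n m : ℕ) :
    ((m : R) + 1) * binomialWeight b (n + 1) (m + 1) = ((n : R) + 1) * binomialWeight b n m := by
  have h := congrArg (Nat.cast : ℕ → R) (Nat.add_one_mul_choose_eq n m)
  push_cast at h
  simp only [binomialWeight, Nat.add_sub_add_right]
  linear_combination -b ^ (n - m) * h

theorem sub_mul_binomialWeight_succ (n m : ℕ) :
    ((n : R) + 1 - m) * binomialWeight b (n + 1) m = b * ((n : R) + 1) * binomialWeight b n m := by
  have h := cast_choose_mul_succ_eq (R := R) n m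
  rcases le_or_gt m n with hm | hm
  · simp only [binomialWeight, show n + 1 - m = n - m + 1 by omega, pow_succ]
    linear_combination (-b ^ (n - m) * b) * h
  · simp only [binomialWeight, Nat.choose_eq_zero_of_lt hm, Nat.cast_zero, zero_mul,
      mul_zero] at h ⊢
    linear_combination (-b ^ (n + 1 - m)) * h

/-- The recurrence of the theorem, applied to the weights in `n`, equals the adjoint of the Franel
recurrence applied in `m`. -/
theorem binomialWeight_neg_eight_relation (n m : ℕ) :
    ((n : R) + 2) ^ 2 * binomialWeight (-8) (n + 2) m
      + (17 * ((n : R) + 1) ^ 2 + 17 * ((n : R) + 1) + 6) * binomialWeight (-8) (n + 1) m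
      + 72 * ((n : R) + 1) ^ 2 * binomialWeight (-8) n m
    = (m : R) ^ 2 * binomialWeight (-8) (n + 1) (m - 1)
      - (7 * (m : R) ^ 2 + 7 * m + 2) * binomialWeight (-8) (n + 1) m
      - 8 * ((m : R) + 1) ^ 2 * binomialWeight (-8) (n + 1) (m + 1) := by
  cases m with
  | zero =>
    have absorb := add_one_mul_binomialWeight_succ_succ (-8 : R) n 0
    push_cast at absorb ⊢
    linear_combination ((n : R) + 2) ^ 2 * binomialWeight_succ_zero (-8 : R) (n + 1)
      + ((n : R) + 1) * (9 * n + 10) * binomialWeight_succ_zero (-8 : R) n + 8 * absorb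
  | succ m =>
    have pascal := binomialWeight_succ_succ (-8 : R) (n + 1) m
    have absorb₁ := add_one_mul_binomialWeight_succ_succ (-8 : R) (n + 1) m
    have absorb₂ := add_one_mul_binomialWeight_succ_succ (-8 : R) n (m + 1)
    have absorb₃ := sub_mul_binomialWeight_succ (-8 : R) n (m + 1)
    push_cast at absorb₁ absorb₂ absorb₃ ⊢
    linear_combination (((n : R) + 2) ^ 2 + (m + 1) * (n + m + 3)) * pascal
      - ((n : R) + m + 3) * absorb₁ + 8 * ((m : R) + 2) * absorb₂
      + (9 * (n : R) + m + 11) * absorb₃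

theorem sum_range_eq_of_le_of_forall_eq_zero {M : Type*} [AddCommMonoid M] {f : ℕ → M}
    {n N : ℕ} (h : n ≤ N) (hf : ∀ k, n ≤ k → f k = 0) :
    ∑ k ∈ range n, f k = ∑ k ∈ range N, f k :=
  sum_subset (range_subset_range.2 h) fun k _ hk => hf k (by simpa using hk)

def binomialTransform (a : ℕ → R) (n : ℕ) : R :=
  ∑ k ∈ range (n + 1), n.choose k * b ^ k * a (n - k)

theorem binomialTransform_eq_sum_binomialWeight (a : ℕ → R) {n N : ℕ} (h : n ≤ N) :
    binomialTransform b a n = ∑ m ∈ range (N + 1), binomialWeight b n m * a m := by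
  rw [← sum_range_eq_of_le_of_forall_eq_zero (by omega : n + 1 ≤ N + 1)
    fun m hm => by rw [binomialWeight_eq_zero_of_lt b (by omega), zero_mul],
    binomialTransform, ← sum_range_reflect]
  refine sum_congr rfl fun k hk => ?_
  have hk : k ≤ n := Nat.lt_succ_iff.mp (mem_range.mp hk)
  rw [binomialWeight, Nat.add_sub_cancel, Nat.choose_symm hk, Nat.sub_sub_self hk]

-- At `m = 0` (resp. `n = 0`) the junk value `a (0 - 1) = a 0` carries the factor `0`.
theorem binomialTransform_neg_eight_recurrence (a : ℕ → R)
    (ha : ∀ m : ℕ, ((m : R) + 1) ^ 2 * a (m + 1)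
      = (7 * (m : R) ^ 2 + 7 * m + 2) * a m + 8 * (m : R) ^ 2 * a (m - 1))
    (n : ℕ) :
    ((n : R) + 1) ^ 2 * binomialTransform (-8) a (n + 1)
      + (17 * (n : R) ^ 2 + 17 * n + 6) * binomialTransform (-8) a n
      + 72 * (n : R) ^ 2 * binomialTransform (-8) a (n - 1) = 0 := by
  cases n with
  | zero =>
    simp only [binomialTransform, sum_range_succ, range_one, sum_singleton, Nat.choose_zero_right,
      Nat.choose_self, Nat.sub_zero, Nat.sub_self]
    linear_combination ha 0
  | succ n =>
    let boundary : ℕ → R := fun m => (m : R) ^ 2 * binomialWeight (-8) (n + 1) (m - 1) * a m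
      + 8 * (m : R) ^ 2 * binomialWeight (-8) (n + 1) m * a (m - 1)
    rw [binomialTransform_eq_sum_binomialWeight _ a (le_refl (n + 2)),
      binomialTransform_eq_sum_binomialWeight _ a (by omega : n + 1 ≤ n + 2),
      Nat.add_sub_cancel, binomialTransform_eq_sum_binomialWeight _ a (by omega : n ≤ n + 2),
      mul_sum, mul_sum, mul_sum, ← sum_add_distrib, ← sum_add_distrib]
    calc _ = ∑ m ∈ range (n + 2 + 1), (boundary m - boundary (m + 1)) := by
          refine sum_congr rfl fun m _ => ?_
          simp only [boundary, Nat.add_sub_cancel]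
          push_cast
          linear_combination a m * binomialWeight_neg_eight_relation (R := R) n m
            + binomialWeight (-8) (n + 1) m * ha m
      _ = 0 := by
          rw [sum_range_sub']
          simp [boundary, binomialWeight_eq_zero_of_lt]

end BinomialWeight

def franel (n : ℕ) : ℕ := ∑ k ∈ range (n + 1), n.choose k ^ 3

-- Zeilberger's certificate for the Franel recurrence at `n + 1`.
def franelCertificate (n j : ℕ) : ℤ :=
  (j : ℤ) ^ 3 * (4 * (j : ℤ) ^ 3 - 6 * (3 * n + 5) * (j : ℤ) ^ 2 + 3 * (n + 2) * (9 * n + 13) * j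
    - 2 * ((n : ℤ) + 2) ^ 2 * (7 * n + 9)) * ((n + 2).choose j : ℤ) ^ 3

theorem franelCertificate_succ_sub (n k : ℕ) :
    ((n : ℤ) + 1) * ((n : ℤ) + 2) ^ 3 * (((n : ℤ) + 2) ^ 2 * ((n + 2).choose k : ℤ) ^ 3
      - (7 * ((n : ℤ) + 1) ^ 2 + 7 * ((n : ℤ) + 1) + 2) * ((n + 1).choose k : ℤ) ^ 3
      - 8 * ((n : ℤ) + 1) ^ 2 * (n.choose k : ℤ) ^ 3)
    = franelCertificate n (k + 1) - franelCertificate n k := by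
  have h₁ := congrArg (· ^ 3) (cast_choose_mul_succ_eq (R := ℤ) (n + 1) k)
  have h₀ := congrArg (· ^ 3) (cast_choose_mul_succ_eq (R := ℤ) n k)
  have h₂ := congrArg (· ^ 3) (cast_choose_succ_right_eq (R := ℤ) (n + 2) k)
  simp only [franelCertificate]
  push_cast at h₀ h₁ h₂ ⊢
  linear_combination (-((n : ℤ) + 1) * (7 * ((n : ℤ) + 1) ^ 2 + 7 * ((n : ℤ) + 1) + 2)
      - 8 * ((n : ℤ) + 1 - k) ^ 3) * h₁
    - 8 * ((n : ℤ) + 2) ^ 3 * h₀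
    - (4 * ((k : ℤ) + 1) ^ 3 - 6 * (3 * n + 5) * ((k : ℤ) + 1) ^ 2
      + 3 * (n + 2) * (9 * n + 13) * ((k : ℤ) + 1) - 2 * ((n : ℤ) + 2) ^ 2 * (7 * n + 9)) * h₂

theorem franel_recurrence (n : ℕ) :
    ((n : ℤ) + 1) ^ 2 * franel (n + 1)
      = (7 * (n : ℤ) ^ 2 + 7 * n + 2) * franel n + 8 * (n : ℤ) ^ 2 * franel (n - 1) := by
  cases n with
  | zero => decide
  | succ n =>
    have extend : ∀ m ≤ n + 2, (franel m : ℤ) = ∑ k ∈ range (n + 3), (m.choose k : ℤ) ^ 3 :=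
      fun m hm => by
        push_cast [franel]
        exact sum_range_eq_of_le_of_forall_eq_zero (by omega) fun k hk => by
          rw [Nat.choose_eq_zero_of_lt (by omega), Nat.cast_zero, zero_pow three_ne_zero]
    have telescoped :=
      sum_congr rfl fun k (_ : k ∈ range (n + 3)) => franelCertificate_succ_sub n k
    rw [sum_range_sub, ← mul_sum, sum_sub_distrib, sum_sub_distrib, ← mul_sum, ← mul_sum,
      ← mul_sum, ← extend _ le_rfl, ← extend _ (by omega), ← extend _ (by omega)] at telescoped
    have boundary : franelCertificate n (n + 3) - franelCertificate n 0 = 0 := by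
      simp [franelCertificate]
    rw [boundary, mul_eq_zero] at telescoped
    push_cast
    linear_combination telescoped.resolve_left (by positivity)

theorem eq_of_threeTermRecurrence {K : Type*} [Field K] (p q r : ℕ → K) (hp : ∀ n, p n ≠ 0)
    {u v : ℕ → K} (hu : ∀ n, p n * u (n + 1) + q n * u n + r n * u (n - 1) = 0)
    (hv : ∀ n, p n * v (n + 1) + q n * v n + r n * v (n - 1) = 0) (h0 : u 0 = v 0) : u = v := by
  have next : ∀ w : ℕ → K, (∀ n, p n * w (n + 1) + q n * w n + r n * w (n - 1) = 0) →
      ∀ n, w (n + 1) = -(q n * w n + r n * w (n - 1)) / p n := fun w hw n => by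
    rw [eq_div_iff (hp n)]
    linear_combination hw n
  funext n
  induction n using Nat.strong_induction_on with
  | _ n ih =>
    cases n with
    | zero => exact h0
    | succ n => rw [next u hu, next v hv, ih n (by omega), ih (n - 1) (by omega)]

theorem stmt17_general (c : ℤ → ℂ) (h0 : c 0 = 1)
    (hrec : ∀ n : ℕ, (n:ℂ)^2 * c ((n:ℤ)-1)
      + (17*(n:ℂ)^2+17*(n:ℂ)+6) * c (n:ℤ)
      + 72*((n:ℂ)+1)^2 * c ((n:ℤ)+1) = 0) :
    (∀ n : ℕ, (72:ℂ)^n * c (n : ℤ)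
        = ∑ k ∈ Finset.range (n+1), (n.choose k : ℂ) * (-8)^k
            * ∑ j ∈ Finset.range (n-k+1), ((n-k).choose j : ℂ)^3) ∧
    ∀ n : ℕ, ∃ d : ℤ, (72:ℂ)^n * c (n : ℤ) = (d : ℂ) := by
  let d : ℕ → ℤ := binomialTransform (-8) fun m => (franel m : ℤ)
  have hd : ∀ n : ℕ, (72 : ℂ) ^ n * c n = d n := by
    refine congrFun (eq_of_threeTermRecurrence (fun n => ((n : ℂ) + 1) ^ 2)
      (fun n => 17 * (n : ℂ) ^ 2 + 17 * n + 6) (fun n => 72 * (n : ℂ) ^ 2)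
      (fun n => pow_ne_zero 2 (Nat.cast_add_one_ne_zero n)) ?_ ?_
      (by simp [h0, d, binomialTransform, franel]))
    · intro n
      cases n with
      | zero =>
        linear_combination (norm := skip) hrec 0
        push_cast
        ring
      | succ n =>
        have h := hrec (n + 1)
        push_cast at h ⊢
        simp only [add_sub_cancel_right] at h ⊢
        linear_combination (72 : ℂ) ^ (n + 1) * h
    · intro n
      exact_mod_cast binomialTransform_neg_eight_recurrence _ franel_recurrence n
  refine ⟨fun n => ?_, fun n => ⟨d n, hd n⟩⟩
  rw [hd]
  simp [d, binomialTransform, franel]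

theorem stmt17 (c : ℤ → ℂ) (hm1 : c (-1) = 0) (h0 : c 0 = 1)
    (hrec : ∀ n : ℕ, (n:ℂ)^2 * c ((n:ℤ)-1)
      + (17*(n:ℂ)^2+17*(n:ℂ)+6) * c (n:ℤ)
      + 72*((n:ℂ)+1)^2 * c ((n:ℤ)+1) = 0) :
    (∀ n : ℕ, (72:ℂ)^n * c (n : ℤ)
        = ∑ k ∈ Finset.range (n+1), (n.choose k : ℂ) * (-8)^k
            * ∑ j ∈ Finset.range (n-k+1), ((n-k).choose j : ℂ)^3) ∧
    ∀ n : ℕ, ∃ d : ℤ, (72:ℂ)^n * c (n : ℤ) = (d : ℂ) :=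
  stmt17_general c h0 hrec
end
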